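/- Let n ≥ 1, x ∈ Sⁿ, and 0 < r < R < π, and let C = closure(B(x,R)) \ B(x,r) be the closed spherical annulus around x in the n-sphere with its intrinsic metric. Then the set of strict contractions is not dense in the space M of nonexpansive self-maps of C with the supremum metric. -/

import Mathlib

open Real

/-- The unit `n`-sphere in Euclidean `(n+1)`-space. -/
abbrev Sph (n : ℕ) : Type := Metric.sphere (0 : EuclideanSpace ℝ (Fin (n + 1))) 1

/-- The intrinsic (great-circle) metric on the unit `n`-sphere. -/
noncomputable def gd {n : ℕ} (x y : Sph n) : ℝ :=
  Real.arccos (inner ℝ (x : EuclideanSpace ℝ (Fin (n + 1))) (y : EuclideanSpace ℝ (Fin (n + 1))))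

/-- A self-map of `C` is nonexpansive with respect to the intrinsic metric. -/
def NonexpOn {n : ℕ} {C : Set (Sph n)} (f : C → C) : Prop :=
  ∀ y z : C, gd (f y).1 (f z).1 ≤ gd y.1 z.1

/-- The supremum metric on self-maps of `C`. -/
noncomputable def dSup {n : ℕ} {C : Set (Sph n)} (f g : C → C) : ℝ :=
  ⨆ z : C, gd (f z).1 (g z).1

/-- `f` is a strict contraction: Lipschitz with some constant `L < 1`. -/
def StrictContractionOn {n : ℕ} {C : Set (Sph n)} (f : C → C) : Prop :=
  ∃ L : ℝ, L < 1 ∧ ∀ y z : C, gd (f y).1 (f z).1 ≤ L * gd y.1 z.1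

/-! The half-turn of the sphere about the axis through `x` preserves the distance to `x`, so it is
an isometry of the annulus. A strict contraction `g` of the compact annulus has a fixed point `p`
(a minimiser of `z ↦ d(z, g z)`), while the half-turn moves a point at distance `θ ∈ [r, R]` from
`x` by `min (2θ) (2π - 2θ) ≥ min (2r) (2(π - R))`; this bounds the sup distance from below. -/

open RealInnerProductSpace Set Filter Topology

section UnitVectors

variable {F : Type*} [NormedAddCommGroup F] [InnerProductSpace ℝ F] {a b : F}

lemma cos_arccos_real_inner (ha : ‖a‖ = 1) (hb : ‖b‖ = 1) :
    cos (arccos ⟪a, b⟫) = ⟪a, b⟫ :=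
  cos_arccos (neg_one_le_real_inner_of_norm_eq_one ha hb) (real_inner_le_one_of_norm_eq_one ha hb)

lemma norm_sub_le_arccos_real_inner (ha : ‖a‖ = 1) (hb : ‖b‖ = 1) :
    ‖a - b‖ ≤ arccos ⟪a, b⟫ := by
  have hchord : ‖a - b‖ ^ 2 = 2 - 2 * ⟪a, b⟫ := by
    rw [norm_sub_sq_real, ha, hb]; ring
  have hcos := one_sub_sq_div_two_le_cos (x := arccos ⟪a, b⟫)
  rw [cos_arccos_real_inner ha hb] at hcos
  nlinarith [arccos_nonneg ⟪a, b⟫, norm_nonneg (a - b)]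

end UnitVectors

lemma min_le_arccos_cos_two_mul {θ r R : ℝ} (hr : r ≤ θ) (hR : θ ≤ R) (hRπ : R ≤ π)
    (hθ : 0 ≤ θ) : min (2 * r) (2 * (π - R)) ≤ arccos (cos (2 * θ)) := by
  rcases le_or_gt θ (π / 2) with hθπ | hθπ
  · rw [arccos_cos (by linarith) (by linarith)]
    exact (min_le_left _ _).trans (by linarith)
  · rw [← cos_two_pi_sub, arccos_cos (by linarith) (by linarith)]
    exact (min_le_right _ _).trans (by linarith)

/-- A minimiser of `z ↦ d z (g z)` is a fixed point. -/
lemma exists_fixedPoint_of_contracting {X : Type*} [TopologicalSpace X] [CompactSpace X]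
    [Nonempty X] {d : X → X → ℝ} (hd : Continuous fun p : X × X => d p.1 p.2)
    (hd_nonneg : ∀ y z, 0 ≤ d y z) (hd_eq : ∀ y z, d y z = 0 → y = z) {g : X → X}
    (hg : Continuous g) {L : ℝ} (hL : L < 1) (hgL : ∀ y z, d (g y) (g z) ≤ L * d y z) :
    ∃ p, g p = p := by
  obtain ⟨p, hp⟩ := (hd.comp (continuous_id.prodMk hg)).exists_forall_le
    (by simp [cocompact_eq_bot])
  refine ⟨p, (hd_eq p (g p) ?_).symm⟩
  have : d p (g p) ≤ L * d p (g p) := (hp (g p)).trans (hgL p (g p))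
  nlinarith [hd_nonneg p (g p)]

namespace Sph

variable {n : ℕ}

local notation "E" n => EuclideanSpace ℝ (Fin (n + 1))

lemma norm_coe (y : Sph n) : ‖(y : E n)‖ = 1 := mem_sphere_zero_iff_norm.mp y.2

lemma gd_nonneg (y z : Sph n) : 0 ≤ gd y z := arccos_nonneg _

lemma gd_le_pi (y z : Sph n) : gd y z ≤ π := arccos_le_pi _

lemma gd_eq_zero_iff {y z : Sph n} : gd y z = 0 ↔ y = z := by
  rw [gd, arccos_eq_zero, ← Subtype.coe_inj]
  constructor
  · intro h
    exact (inner_eq_one_iff_of_norm_eq_one (norm_coe y) (norm_coe z)).mp <|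
      (real_inner_le_one_of_norm_eq_one (norm_coe y) (norm_coe z)).antisymm h
  · intro h
    rw [h]
    exact (inner_self_eq_one_of_norm_eq_one (norm_coe z)).ge

lemma _root_.Continuous.gd {X : Type*} [TopologicalSpace X] {f g : X → Sph n}
    (hf : Continuous f) (hg : Continuous g) : Continuous fun t => gd (f t) (g t) :=
  continuous_arccos.comp ((continuous_subtype_val.comp hf).inner (continuous_subtype_val.comp hg))

lemma dist_le_gd (y z : Sph n) : dist y z ≤ gd y z := by
  rw [Subtype.dist_eq, dist_eq_norm]
  exact norm_sub_le_arccos_real_inner (norm_coe y) (norm_coe z)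

lemma exists_gd_eq (hn : 1 ≤ n) (x : Sph n) {ρ : ℝ} (hρ₀ : 0 ≤ ρ) (hρπ : ρ ≤ π) :
    ∃ y, gd x y = ρ := by
  have hrank : 1 < Module.rank ℝ (E n) := by
    rw [← Module.finrank_eq_rank, finrank_euclideanSpace_fin]
    exact_mod_cast Nat.lt_succ_of_le hn
  have : PreconnectedSpace (Sph n) :=
    isPreconnected_iff_preconnectedSpace.mp (isPreconnected_sphere hrank 0 1)
  have hgd_self : gd x x = 0 := gd_eq_zero_iff.mpr rfl
  have hgd_neg : gd x ⟨-x, by simp⟩ = π := by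
    rw [gd, inner_neg_right, inner_self_eq_one_of_norm_eq_one (norm_coe x), arccos_neg_one]
  exact intermediate_value_univ x ⟨-x, by simp⟩ (continuous_const.gd continuous_id)
    ⟨hgd_self ▸ hρ₀, hgd_neg ▸ hρπ⟩

lemma _root_.NonexpOn.continuous {C : Set (Sph n)} {g : C → C} (hg : NonexpOn g) :
    Continuous g := by
  refine continuous_iff_continuousAt.mpr fun a => tendsto_iff_dist_tendsto_zero.mpr ?_
  have hgd_a : Tendsto (fun b : C => gd b.1 a.1) (𝓝 a) (𝓝 0) := by
    have hcont : Continuous fun b : C => gd b.1 a.1 :=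
      continuous_subtype_val.gd continuous_const
    simpa [gd_eq_zero_iff.mpr rfl] using hcont.tendsto a
  exact squeeze_zero (fun _ => dist_nonneg)
    (fun b => (dist_le_gd (g b).1 (g a).1).trans (hg b a)) hgd_a

lemma gd_le_dSup {C : Set (Sph n)} (f g : C → C) (z : C) : gd (f z).1 (g z).1 ≤ dSup f g :=
  le_ciSup (f := fun y => gd (f y).1 (g y).1) ⟨π, by rintro _ ⟨y, rfl⟩; exact gd_le_pi _ _⟩ z

lemma _root_.StrictContractionOn.exists_fixedPoint {C : Set (Sph n)} [CompactSpace C]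
    [Nonempty C] {g : C → C} (hg : StrictContractionOn g) (hg_cont : Continuous g) :
    ∃ p, g p = p := by
  obtain ⟨L, hL, hgL⟩ := hg
  have hd : Continuous fun p : C × C => gd p.1.1 p.2.1 :=
    (continuous_subtype_val.comp continuous_fst).gd (continuous_subtype_val.comp continuous_snd)
  exact exists_fixedPoint_of_contracting hd (fun y z => gd_nonneg _ _)
    (fun y z h => Subtype.ext (gd_eq_zero_iff.mp h)) hg_cont hL hgL

/-- The half-turn about the axis through `x`, i.e. `y ↦ 2 ⟪x, y⟫ x - y`. -/
noncomputable def halfTurn (x y : Sph n) : Sph n :=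
  ⟨(ℝ ∙ (x : E n)).reflection y, by simp⟩

variable (x : Sph n)

lemma continuous_halfTurn : Continuous (halfTurn x) :=
  ((ℝ ∙ (x : E n)).reflection.continuous.comp continuous_subtype_val).subtype_mk _

lemma gd_halfTurn_halfTurn (y z : Sph n) : gd (halfTurn x y) (halfTurn x z) = gd y z := by
  simp only [gd, halfTurn, LinearIsometryEquiv.inner_map_map]

lemma gd_halfTurn_right (y : Sph n) : gd x (halfTurn x y) = gd x y := by
  have hx : (ℝ ∙ (x : E n)).reflection x = x :=
    Submodule.reflection_mem_subspace_eq_self (Submodule.mem_span_singleton_self _)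
  simp only [gd, halfTurn]
  rw [← LinearIsometryEquiv.inner_map_map (ℝ ∙ (x : E n)).reflection, hx,
    Submodule.reflection_reflection]

lemma gd_halfTurn_self (y : Sph n) : gd (halfTurn x y) y = arccos (cos (2 * gd x y)) := by
  rw [cos_two_mul, gd, gd, cos_arccos_real_inner (norm_coe x) (norm_coe y)]
  congr 1
  simp only [halfTurn, Submodule.reflection_apply, Submodule.starProjection_singleton, norm_coe]
  rw [two_smul, inner_sub_left, inner_add_left, real_inner_smul_left, real_inner_self_eq_norm_sq,
    norm_coe]
  norm_num
  ring

def annulus (x : Sph n) (r R : ℝ) : Set (Sph n) :=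
  closure {y | gd x y < R} \ {y | gd x y < r}

variable {r R : ℝ}

lemma isClosed_annulus : IsClosed (annulus x r R) :=
  isClosed_closure.sdiff (isOpen_lt (continuous_const.gd continuous_id) continuous_const)

lemma gd_mem_Icc_of_mem_annulus {y : Sph n} (hy : y ∈ annulus x r R) : gd x y ∈ Icc r R :=
  ⟨not_lt.mp hy.2,
    closure_lt_subset_le (continuous_const.gd continuous_id) continuous_const hy.1⟩

lemma nonempty_annulus (hn : 1 ≤ n) (hr : 0 ≤ r) (hrR : r < R) (hR : R ≤ π) :
    (annulus x r R).Nonempty := by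
  obtain ⟨y, hy⟩ := exists_gd_eq hn x (ρ := (r + R) / 2) (by linarith) (by linarith)
  exact ⟨y, subset_closure (show gd x y < R by linarith), fun h : gd x y < r => by linarith⟩

lemma mapsTo_halfTurn_annulus : MapsTo (halfTurn x) (annulus x r R) (annulus x r R) := by
  intro y hy
  refine ⟨map_mem_closure (continuous_halfTurn x) hy.1 fun z hz => ?_, ?_⟩
  · simpa only [mem_ofPred_eq, gd_halfTurn_right] using hz
  · simpa only [mem_ofPred_eq, gd_halfTurn_right] using hy.2

lemma min_le_gd_halfTurn_self (hR : R ≤ π) {y : Sph n} (hy : y ∈ annulus x r R) :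
    min (2 * r) (2 * (π - R)) ≤ gd (halfTurn x y) y := by
  rw [gd_halfTurn_self]
  exact min_le_arccos_cos_two_mul (gd_mem_Icc_of_mem_annulus x hy).1
    (gd_mem_Icc_of_mem_annulus x hy).2 hR (gd_nonneg _ _)

end Sph

theorem strict_contractions_not_dense_on_annulus
    (n : ℕ) (hn : 1 ≤ n) (x : Sph n) (r R : ℝ) (hr : 0 < r) (hrR : r < R) (hR : R < π)
    (C : Set (Sph n))
    (hC : C = closure {y : Sph n | gd x y < R} \ {y : Sph n | gd x y < r}) :
    ∃ f : C → C, NonexpOn f ∧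
      ∃ δ : ℝ, 0 < δ ∧ ∀ g : C → C, NonexpOn g → StrictContractionOn g → δ ≤ dSup f g := by
  change C = x.annulus r R at hC
  subst hC
  have : CompactSpace (x.annulus r R) :=
    isCompact_iff_compactSpace.mp (Sph.isClosed_annulus x).isCompact
  have : Nonempty (x.annulus r R) := (Sph.nonempty_annulus x hn hr.le hrR hR.le).to_subtype
  set f := (Sph.mapsTo_halfTurn_annulus x).restrict
  refine ⟨f, fun y z => (Sph.gd_halfTurn_halfTurn x y z).le, min (2 * r) (2 * (π - R)),
    lt_min (by linarith) (by linarith), fun g hg_nonexp hg_contr => ?_⟩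
  obtain ⟨p, hp⟩ := hg_contr.exists_fixedPoint hg_nonexp.continuous
  calc min (2 * r) (2 * (π - R))
      ≤ gd (x.halfTurn p) p := Sph.min_le_gd_halfTurn_self x hR.le p.2
    _ = gd (f p).1 (g p).1 := by rw [hp]; rfl
    _ ≤ dSup f g := Sph.gd_le_dSup f g p
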